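/- arXiv:2505.22826 — 3 statements merged into one kernel-verified Lean document; each statement's English description precedes it below -/
import Mathlib

section
/- Let H = (V, 𝓔) be a grounded acyclic directed hypergraph and x ∈ V. Define 𝓔_{≤x} as the set of hyperedges E ∈ 𝓔 such that every z ∈ E⁻ satisfies z ≤ x and some y ∈ E⁺ satisfies y ≤ x, let V_{≤x} be the set of all vertices occurring in hyperedges of 𝓔_{≤x}, and let V⁻_{≤x} = {x} ∪ ⋃_{E ∈ 𝓔_{≤x}} E⁻. Then the reachability relation ≤' of the subhypergraph H_≤[x] = (V_{≤x}, 𝓔_{≤x}) coincides with the reachability relation ≤ of H on V⁻_{≤x}: for all u, v ∈ V⁻_{≤x}, u ≤' v if and only if u ≤ v. -/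
/-- A directed hypergraph on a vertex type `V`: a set of vertices together with a set of
hyperedges, each hyperedge being a pair `(E⁻, E⁺)` of finite sets of vertices
(its tail and head), all of whose vertices belong to the vertex set. -/
structure DirectedHypergraph (V : Type*) where
  verts : Set V
  edges : Set (Finset V × Finset V)
  wf_tail : ∀ E ∈ edges, ∀ v ∈ E.1, v ∈ verts
  wf_head : ∀ E ∈ edges, ∀ v ∈ E.2, v ∈ verts

namespace DirectedHypergraph

variable {V : Type*}

/-- The one-step relation: `x` is in the tail and `y` in the head of a common hyperedge. -/
def OneStep (H : DirectedHypergraph V) (x y : V) : Prop :=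
  ∃ E ∈ H.edges, x ∈ E.1 ∧ y ∈ E.2

/-- Reachability: the reflexive-transitive closure of the one-step relation. -/
def Reach (H : DirectedHypergraph V) : V → V → Prop :=
  Relation.ReflTransGen H.OneStep

/-- Acyclicity: the transitive closure of the one-step relation is irreflexive. -/
def Acyclic (H : DirectedHypergraph V) : Prop :=
  ∀ x : V, ¬ Relation.TransGen H.OneStep x x

/-- A vertex `z` is minimal if `y ≤ z` implies `y = z`. -/
def MinimalVert (H : DirectedHypergraph V) (z : V) : Prop :=
  z ∈ H.verts ∧ ∀ y : V, H.Reach y z → y = z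

/-- `H` is grounded if below every vertex there is a minimal vertex. -/
def Grounded (H : DirectedHypergraph V) : Prop :=
  ∀ x ∈ H.verts, ∃ z : V, H.MinimalVert z ∧ H.Reach z x

/-- `H'` is a subhypergraph of `H`. -/
def Subhypergraph (H' H : DirectedHypergraph V) : Prop :=
  H'.verts ⊆ H.verts ∧ H'.edges ⊆ H.edges

/-- `H` is a B-hypergraph: every head is a singleton. -/
def IsB (H : DirectedHypergraph V) : Prop :=
  ∀ E ∈ H.edges, ∃ y : V, E.2 = {y}

end DirectedHypergraph

namespace DirectedHypergraph

variable {V : Type*}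

/-- The hyperedges all of whose tail vertices reach `x` and at least one of whose head
vertices reaches `x`. -/
def belowEdges (H : DirectedHypergraph V) (x : V) : Set (Finset V × Finset V) :=
  {E ∈ H.edges | (∀ z ∈ E.1, H.Reach z x) ∧ ∃ y ∈ E.2, H.Reach y x}

/-- All vertices occurring in hyperedges of `belowEdges H x`. -/
def belowVerts (H : DirectedHypergraph V) (x : V) : Set V :=
  {v | ∃ E ∈ H.belowEdges x, v ∈ E.1 ∨ v ∈ E.2}

/-- The subhypergraph `H_≤[x] = (V_{≤x}, 𝓔_{≤x})`. -/
def belowHypergraph (H : DirectedHypergraph V) (x : V) : DirectedHypergraph V where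
  verts := H.belowVerts x
  edges := H.belowEdges x
  wf_tail := fun E hE v hv => ⟨E, hE, Or.inl hv⟩
  wf_head := fun E hE v hv => ⟨E, hE, Or.inr hv⟩

end DirectedHypergraph

/-!
Along an `H`-path from `u` to `v` with `v ≤ x`, every edge used has a head vertex on the path,
which reaches `x`; each of its tail vertices then reaches `x` through that head vertex. So every
edge of the path lies in `𝓔_{≤x}`, and the path is already a path of `H_≤[x]`.
-/

namespace DirectedHypergraph

variable {V : Type*}

theorem Reach.mono_edges {H' H : DirectedHypergraph V} (h : H'.edges ⊆ H.edges) {u v : V}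
    (huv : H'.Reach u v) : H.Reach u v :=
  Relation.ReflTransGen.mono (fun _ _ ⟨E, hE, ha, hb⟩ => ⟨E, h hE, ha, hb⟩) u v huv

theorem mem_belowEdges_of_head_reach {H : DirectedHypergraph V} {x : V} {E : Finset V × Finset V}
    (hE : E ∈ H.edges) {w : V} (hw : w ∈ E.2) (hwx : H.Reach w x) : E ∈ H.belowEdges x :=
  ⟨hE, fun _ hz => Relation.ReflTransGen.head ⟨E, hE, hz, hw⟩ hwx, w, hw, hwx⟩

theorem belowHypergraph_reach_of_reach {H : DirectedHypergraph V} {x u v : V}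
    (huv : H.Reach u v) (hvx : H.Reach v x) : (H.belowHypergraph x).Reach u v := by
  induction huv using Relation.ReflTransGen.head_induction_on with
  | refl => exact Relation.ReflTransGen.refl
  | head hstep hrest ih =>
    obtain ⟨E, hE, haE, hwE⟩ := hstep
    exact Relation.ReflTransGen.head
      ⟨E, mem_belowEdges_of_head_reach hE hwE (hrest.trans hvx), haE, hwE⟩ ih

theorem reach_of_mem_insert_belowTails {H : DirectedHypergraph V} {x v : V}
    (hv : v ∈ insert x {v : V | ∃ E ∈ H.belowEdges x, v ∈ E.1}) : H.Reach v x := by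
  rcases hv with rfl | ⟨E, hE, hvE⟩
  · exact Relation.ReflTransGen.refl
  · exact hE.2.1 v hvE

end DirectedHypergraph

open DirectedHypergraph in
theorem belowHypergraph_reach_coincide_general {V : Type*} (H : DirectedHypergraph V)
    (x : V) :
    ∀ u ∈ insert x {v : V | ∃ E ∈ H.belowEdges x, v ∈ E.1},
      ∀ v ∈ insert x {v : V | ∃ E ∈ H.belowEdges x, v ∈ E.1},
        ((H.belowHypergraph x).Reach u v ↔ H.Reach u v) :=
  fun _ _ _ hv =>
    ⟨Reach.mono_edges (H' := H.belowHypergraph x) (Set.sep_subset _ _),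
      fun huv => belowHypergraph_reach_of_reach huv (reach_of_mem_insert_belowTails hv)⟩

open DirectedHypergraph in
/-- For a grounded acyclic directed hypergraph `H` and `x ∈ V`, the
reachability relations of `H_≤[x]` and of `H` coincide on
`V⁻_{≤x} = {x} ∪ ⋃_{E ∈ 𝓔_{≤x}} E⁻`. -/
theorem belowHypergraph_reach_coincide {V : Type*} (H : DirectedHypergraph V)
    (hg : H.Grounded) (ha : H.Acyclic) (x : V) (hx : x ∈ H.verts) :
    ∀ u ∈ insert x {v : V | ∃ E ∈ H.belowEdges x, v ∈ E.1},
      ∀ v ∈ insert x {v : V | ∃ E ∈ H.belowEdges x, v ∈ E.1},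
        ((H.belowHypergraph x).Reach u v ↔ H.Reach u v) :=
  belowHypergraph_reach_coincide_general H x
end

section
/- Let H be a grounded acyclic B-hypergraph and x a vertex of H, and suppose there exists an assembly pathway for x with finitely many hyperedges. Then the minimum, over all assembly pathways P for x, of the number of hyperedges of P equals the minimum, over all assembly pathways P for x, of the number of vertices of P that are not minimal vertices of P. -/
namespace DirectedHypergraph

variable {V : Type*}

/-- `P` is rooted in `H`: `P` is a grounded subhypergraph of `H` and every minimal vertex
of `P` is a minimal vertex of `H`. -/
def RootedIn (P H : DirectedHypergraph V) : Prop :=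
  P.Subhypergraph H ∧ P.Grounded ∧ ∀ z : V, P.MinimalVert z → H.MinimalVert z

/-- An assembly pathway for `x`: a subhypergraph `P` of `H` containing `x` that is rooted
in `H` and such that every vertex in the tail of a hyperedge of `P` reaches `x` within `P`. -/
def IsAssemblyPathway (H : DirectedHypergraph V) (x : V) (P : DirectedHypergraph V) : Prop :=
  x ∈ P.verts ∧ P.RootedIn H ∧ ∀ E ∈ P.edges, ∀ z ∈ E.1, P.Reach z x

end DirectedHypergraph

/-!
An assembly pathway with finitely many hyperedges has at least as many hyperedges as
non-minimal vertices: every non-minimal vertex is the head of a hyperedge, and in a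
B-hypergraph distinct vertices are heads of distinct hyperedges. Conversely, pick for every
non-minimal vertex `v` of a pathway `P` one hyperedge with head `{v}`, and keep only the
chosen hyperedges of the vertices reached from `x` by repeatedly passing from a vertex to
the tail of its chosen hyperedge. The result is again an
assembly pathway: it is acyclic with finitely many hyperedges, hence grounded, and each of
its vertices that is not minimal in `P` still has its chosen incoming hyperedge, so its
minimal vertices are minimal in `P`. It has at most one hyperedge per non-minimal vertex
of `P`.
-/

namespace DirectedHypergraph

variable {V : Type*} {H P Q : DirectedHypergraph V} {x v : V}

def nonMinimalVerts (P : DirectedHypergraph V) : Set V :=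
  {v ∈ P.verts | ¬ P.MinimalVert v}

lemma oneStep_mono (hPQ : P.edges ⊆ Q.edges) : P.OneStep ≤ Q.OneStep :=
  fun _ _ ⟨E, hE, hx, hy⟩ => ⟨E, hPQ hE, hx, hy⟩

lemma Acyclic.mono (hPQ : P.edges ⊆ Q.edges) (hQ : Q.Acyclic) : P.Acyclic := fun a h =>
  hQ a (Relation.TransGen.mono (oneStep_mono hPQ) a a h)

lemma Subhypergraph.trans (hQP : Q.Subhypergraph P) (hPH : P.Subhypergraph H) :
    Q.Subhypergraph H :=
  ⟨hQP.1.trans hPH.1, hQP.2.trans hPH.2⟩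

lemma IsAssemblyPathway.subhypergraph (hP : H.IsAssemblyPathway x P) : P.Subhypergraph H :=
  hP.2.1.1

lemma IsB.mono (hPH : P.Subhypergraph H) (hB : H.IsB) : P.IsB := fun E hE => hB E (hPH.2 hE)

lemma IsB.head_eq_singleton (hB : P.IsB) {E : Finset V × Finset V} (hE : E ∈ P.edges)
    (hv : v ∈ E.2) : E.2 = {v} := by
  obtain ⟨y, hy⟩ := hB E hE
  rw [hy, Finset.mem_singleton] at hv
  rw [hy, hv]

lemma exists_oneStep_of_not_minimalVert (hv : v ∈ P.verts) (h : ¬ P.MinimalVert v) :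
    ∃ y, P.OneStep y v := by
  obtain ⟨y, hyv, hne⟩ : ∃ y, P.Reach y v ∧ y ≠ v := by
    simpa [MinimalVert, hv] using h
  rcases Relation.ReflTransGen.cases_tail hyv with rfl | ⟨c, -, hcv⟩
  · exact (hne rfl).elim
  · exact ⟨c, hcv⟩

lemma Acyclic.not_oneStep_self (ha : P.Acyclic) (v : V) : ¬ P.OneStep v v :=
  fun h => ha v (Relation.TransGen.single h)

lemma finite_setOf_reach (hfin : P.edges.Finite) (v : V) : {w | P.Reach w v}.Finite := by
  refine ((hfin.biUnion fun E _ => E.1.finite_toSet).insert v).subset fun w hw => ?_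
  rcases Relation.ReflTransGen.cases_head hw with rfl | ⟨c, ⟨E, hE, hwE, -⟩, -⟩
  · exact Set.mem_insert w _
  · exact Set.mem_insert_of_mem v (Set.mem_biUnion hE hwE)

lemma Acyclic.grounded (ha : P.Acyclic) (hfin : P.edges.Finite) : P.Grounded := by
  intro v hv
  have : IsStrictOrder V (Relation.TransGen P.OneStep) := { irrefl := ha }
  refine ((finite_setOf_reach hfin v).wellFoundedOn (r := Relation.TransGen P.OneStep)).induction
    (P := fun w => w ∈ P.verts → ∃ z, P.MinimalVert z ∧ P.Reach z w)
    (Relation.ReflTransGen.refl : P.Reach v v) ?_ hv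
  intro w hwv ih hw
  by_cases hmin : P.MinimalVert w
  · exact ⟨w, hmin, Relation.ReflTransGen.refl⟩
  obtain ⟨c, E, hE, hcE, hwE⟩ := exists_oneStep_of_not_minimalVert hw hmin
  have hcw : P.OneStep c w := ⟨E, hE, hcE, hwE⟩
  obtain ⟨z, hz, hzc⟩ := ih c (Relation.ReflTransGen.head hcw hwv) (Relation.TransGen.single hcw)
    (P.wf_tail E hE c hcE)
  exact ⟨z, hz, hzc.tail hcw⟩

lemma nonMinimalVerts_finite (hfin : P.edges.Finite) : P.nonMinimalVerts.Finite := by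
  refine (hfin.biUnion fun E _ => E.2.finite_toSet).subset fun v ⟨hv, hmin⟩ => ?_
  obtain ⟨_, E, hE, -, hvE⟩ := exists_oneStep_of_not_minimalVert hv hmin
  exact Set.mem_biUnion hE hvE

lemma IsB.ncard_nonMinimalVerts_le (hB : P.IsB) (hfin : P.edges.Finite) :
    P.nonMinimalVerts.ncard ≤ P.edges.ncard := by
  have hchoice : ∀ v ∈ P.nonMinimalVerts, ∃ E ∈ P.edges, v ∈ E.2 := fun v hv => by
    obtain ⟨_, E, hE, -, hvE⟩ := exists_oneStep_of_not_minimalVert hv.1 hv.2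
    exact ⟨E, hE, hvE⟩
  choose! e heP hve using hchoice
  refine Set.ncard_le_ncard_of_injOn e heP (fun a ha b hb hab => ?_) hfin
  have hsingleton : ({a} : Finset V) = {b} := by
    rw [← hB.head_eq_singleton (heP a ha) (hve a ha), ← hB.head_eq_singleton (heP b hb) (hve b hb),
      hab]
  exact Finset.singleton_inj.mp hsingleton

lemma IsAssemblyPathway.of_subhypergraph (hP : H.IsAssemblyPathway x P) (ha : H.Acyclic)
    (hQP : Q.Subhypergraph P) (hfin : Q.edges.Finite) (hx : x ∈ Q.verts)
    (htail : ∀ E ∈ Q.edges, ∀ z ∈ E.1, Q.Reach z x)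
    (hin : ∀ v ∈ Q.verts, ¬ P.MinimalVert v → ∃ y, Q.OneStep y v) :
    H.IsAssemblyPathway x Q := by
  obtain ⟨-, ⟨hPH, -, hroot⟩, -⟩ := hP
  have hQa : Q.Acyclic := ha.mono (hQP.trans hPH).2
  refine ⟨hx, ⟨hQP.trans hPH, hQa.grounded hfin, fun z hz => hroot z ?_⟩, htail⟩
  by_contra hPz
  obtain ⟨y, hyz⟩ := hin z hz.1 hPz
  obtain rfl := hz.2 y (Relation.ReflTransGen.single hyz)
  exact hQa.not_oneStep_self y hyz

def ofEdges (x : V) (F : Set (Finset V × Finset V)) : DirectedHypergraph V where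
  verts := insert x {w | ∃ E ∈ F, w ∈ E.1 ∨ w ∈ E.2}
  edges := F
  wf_tail E hE _ hw := Or.inr ⟨E, hE, Or.inl hw⟩
  wf_head E hE _ hw := Or.inr ⟨E, hE, Or.inr hw⟩

def chosenAncestors (S : Set V) (e : V → Finset V × Finset V) (x : V) : Set V :=
  {w ∈ S | Relation.ReflTransGen (fun v w => v ∈ S ∧ w ∈ (e v).1) x w}

section chosenAncestors

variable {S : Set V} {e : V → Finset V × Finset V}

lemma mem_chosenAncestors_of_mem_tail (hv : v ∈ chosenAncestors S e x) {w : V}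
    (hw : w ∈ (e v).1) (hwS : w ∈ S) : w ∈ chosenAncestors S e x :=
  ⟨hwS, hv.2.tail ⟨hv.1, hw⟩⟩

lemma oneStep_ofEdges_chosenAncestors (hhead : ∀ v ∈ S, v ∈ (e v).2)
    (hv : v ∈ chosenAncestors S e x) {w : V} (hw : w ∈ (e v).1) :
    (ofEdges x (e '' chosenAncestors S e x)).OneStep w v :=
  ⟨e v, ⟨v, hv, rfl⟩, hw, hhead v hv.1⟩

lemma reach_ofEdges_chosenAncestors (hhead : ∀ v ∈ S, v ∈ (e v).2)
    (hv : v ∈ chosenAncestors S e x) : (ofEdges x (e '' chosenAncestors S e x)).Reach v x := by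
  obtain ⟨hvS, hxv⟩ := hv
  induction hxv with
  | refl => exact Relation.ReflTransGen.refl
  | @tail u w hxu huw ih =>
    exact Relation.ReflTransGen.head
      (oneStep_ofEdges_chosenAncestors hhead ⟨huw.1, hxu⟩ huw.2) (ih huw.1)

lemma mem_chosenAncestors_of_mem_ofEdges (hhead : ∀ v ∈ S, (e v).2 = {v})
    (hv : v ∈ (ofEdges x (e '' chosenAncestors S e x)).verts) (hvS : v ∈ S) :
    v ∈ chosenAncestors S e x := by
  rcases hv with rfl | ⟨_, ⟨u, hu, rfl⟩, hvu | hvu⟩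
  · exact ⟨hvS, Relation.ReflTransGen.refl⟩
  · exact mem_chosenAncestors_of_mem_tail hu hvu hvS
  · rw [hhead u hu.1, Finset.mem_singleton] at hvu
    exact hvu ▸ hu

end chosenAncestors

lemma IsAssemblyPathway.exists_ncard_edges_le (hP : H.IsAssemblyPathway x P)
    (ha : H.Acyclic) (hB : H.IsB) (hfin : P.edges.Finite) :
    ∃ Q, H.IsAssemblyPathway x Q ∧ Q.edges.Finite ∧
      Q.edges.ncard ≤ P.nonMinimalVerts.ncard := by
  have hchoice : ∀ v ∈ P.nonMinimalVerts, ∃ E ∈ P.edges, ∃ y ∈ E.1, v ∈ E.2 :=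
    fun v hv => by
      obtain ⟨y, E, hE, hyE, hvE⟩ := exists_oneStep_of_not_minimalVert hv.1 hv.2
      exact ⟨E, hE, y, hyE, hvE⟩
  choose! e heP t ht hve using hchoice
  have hhead : ∀ v ∈ P.nonMinimalVerts, (e v).2 = {v} := fun v hv =>
    (hB.mono hP.subhypergraph).head_eq_singleton (heP v hv) (hve v hv)
  set A := chosenAncestors P.nonMinimalVerts e x
  have hAfin : A.Finite := (nonMinimalVerts_finite hfin).subset fun _ h => h.1
  have hQP : (ofEdges x (e '' A)).Subhypergraph P := by
    refine ⟨Set.insert_subset hP.1 ?_, Set.image_subset_iff.mpr fun v hv => heP v hv.1⟩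
    rintro w ⟨_, ⟨v, hv, rfl⟩, hw | hw⟩
    · exact P.wf_tail _ (heP v hv.1) w hw
    · exact P.wf_head _ (heP v hv.1) w hw
  refine ⟨_, hP.of_subhypergraph ha hQP (hAfin.image e) (Set.mem_insert x _) ?_ ?_,
    hAfin.image e, (Set.ncard_image_le hAfin).trans (Set.ncard_le_ncard (fun _ h => h.1)
      (nonMinimalVerts_finite hfin))⟩
  · rintro _ ⟨v, hv, rfl⟩ w hw
    exact Relation.ReflTransGen.head (oneStep_ofEdges_chosenAncestors hve hv hw)
      (reach_ofEdges_chosenAncestors hve hv)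
  · intro v hv hmin
    have hvA := mem_chosenAncestors_of_mem_ofEdges hhead hv ⟨hQP.1 hv, hmin⟩
    exact ⟨t v, oneStep_ofEdges_chosenAncestors hve hvA (ht v hvA.1)⟩

end DirectedHypergraph

open DirectedHypergraph in
theorem assembly_index_edges_eq_verts_general {V : Type*} (H : DirectedHypergraph V)
    (ha : H.Acyclic) (hB : H.IsB) (x : V) :
    sInf {n : ℕ | ∃ P : DirectedHypergraph V,
        H.IsAssemblyPathway x P ∧ P.edges.Finite ∧ P.edges.ncard = n} =
      sInf {n : ℕ | ∃ P : DirectedHypergraph V,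
        H.IsAssemblyPathway x P ∧ P.edges.Finite ∧
          {v ∈ P.verts | ¬ P.MinimalVert v}.ncard = n} := by
  refine csInf_eq_csInf_of_forall_exists_le ?_ ?_
  · rintro _ ⟨P, hP, hfin, rfl⟩
    exact ⟨_, ⟨P, hP, hfin, rfl⟩, (hB.mono hP.subhypergraph).ncard_nonMinimalVerts_le hfin⟩
  · rintro _ ⟨P, hP, hfin, rfl⟩
    obtain ⟨Q, hQ, hQfin, hle⟩ := hP.exists_ncard_edges_le ha hB hfin
    exact ⟨_, ⟨Q, hQ, hQfin, rfl⟩, hle⟩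

open DirectedHypergraph in
/-- In a grounded acyclic B-hypergraph, provided some assembly pathway for `x`
with finitely many hyperedges exists, the minimum number of hyperedges over assembly
pathways for `x` equals the minimum number of non-minimal vertices over assembly
pathways for `x`. -/
theorem assembly_index_edges_eq_verts {V : Type*} (H : DirectedHypergraph V)
    (hg : H.Grounded) (ha : H.Acyclic) (hB : H.IsB) (x : V)
    (hex : ∃ P : DirectedHypergraph V, H.IsAssemblyPathway x P ∧ P.edges.Finite) :
    sInf {n : ℕ | ∃ P : DirectedHypergraph V,
        H.IsAssemblyPathway x P ∧ P.edges.Finite ∧ P.edges.ncard = n} =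
      sInf {n : ℕ | ∃ P : DirectedHypergraph V,
        H.IsAssemblyPathway x P ∧ P.edges.Finite ∧
          {v ∈ P.verts | ¬ P.MinimalVert v}.ncard = n} :=
  assembly_index_edges_eq_verts_general H ha hB x
end

section
/- Let Γ = (V, Q, h⁻, h⁺) be a directed multigraph with an edge labeling φ : Q → V satisfying the assembly-space condition: for every edge e ∈ Q with h⁻(e) = x, h⁺(e) = z and φ(e) = y, there is an edge f ∈ Q with h⁻(f) = y, h⁺(f) = z and φ(f) = x. Let H(Γ) be the directed hypergraph on V whose hyperedges are the pairs (⟦x, y⟧, {z}) with tail the two-element multiset ⟦x, y⟧, one for each triple (x, y, z) such that some edge e ∈ Q has h⁻(e) = x, h⁺(e) = z and φ(e) = y. Then for all x, y ∈ V, y is reachable from x in Γ if and only if y is reachable from x in H(Γ); in particular, Γ is acyclic if and only if H(Γ) is acyclic. -/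
/-- A directed hypergraph whose hyperedge tails are finite multisets of vertices and whose
heads are finite sets of vertices. -/
structure MDirectedHypergraph (V : Type*) where
  edges : Set (Multiset V × Finset V)

namespace MDirectedHypergraph

variable {V : Type*}

/-- One-step relation: `x` in the tail and `y` in the head of a common hyperedge. -/
def OneStep (H : MDirectedHypergraph V) (x y : V) : Prop :=
  ∃ E ∈ H.edges, x ∈ E.1 ∧ y ∈ E.2

/-- Reachability: reflexive-transitive closure of the one-step relation. -/
def Reach (H : MDirectedHypergraph V) : V → V → Prop :=
  Relation.ReflTransGen H.OneStep

/-- Acyclicity: the transitive closure of the one-step relation is irreflexive. -/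
def Acyclic (H : MDirectedHypergraph V) : Prop :=
  ∀ x : V, ¬ Relation.TransGen H.OneStep x x

end MDirectedHypergraph

/-- The one-step (arc) relation of a directed multigraph given by head and tail maps. -/
def quiverStep {V Q : Type*} (hm hp : Q → V) (x y : V) : Prop :=
  ∃ e : Q, hm e = x ∧ hp e = y

/-- The directed hypergraph `H(Γ)` associated with an edge-labeled directed multigraph:
one hyperedge `(⟦x, y⟧, {z})` for each triple `(x, y, z)` such that some edge `e` has
tail `x`, head `z` and label `y`. -/
def quiverHypergraph {V Q : Type*} (hm hp : Q → V) (φ : Q → V) : MDirectedHypergraph V :=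
  ⟨{E | ∃ e : Q, E = (({hm e, φ e} : Multiset V), ({hp e} : Finset V))}⟩

theorem step_eq {V Q : Type*} (hm hp : Q → V) (φ : Q → V)
    (hcond : ∀ e : Q, ∃ f : Q, hm f = φ e ∧ hp f = hp e ∧ φ f = hm e) :
    quiverStep hm hp = (quiverHypergraph hm hp φ).OneStep := by
  funext x y
  apply propext
  constructor
  · rintro ⟨e, rfl, rfl⟩
    exact ⟨_, ⟨e, rfl⟩, by simp, by simp⟩
  · rintro ⟨E, ⟨e, rfl⟩, hx, hy⟩
    have hx2 : x = hm e ∨ x = φ e := by simpa using hx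
    have hy2 : y = hp e := by simpa using hy
    subst hy2
    rcases hx2 with h | h
    · exact ⟨e, h.symm, rfl⟩
    · obtain ⟨f, h1, h2, _⟩ := hcond e
      exact ⟨f, h1.trans h.symm, h2⟩

/-- For a directed multigraph `Γ = (V, Q, h⁻, h⁺)` with an edge labeling
`φ : Q → V` satisfying the assembly-space condition, reachability in `Γ` coincides with
reachability in the associated hypergraph `H(Γ)`; in particular `Γ` is acyclic iff `H(Γ)`
is acyclic. -/
theorem quiver_reach_iff_hypergraph_reach {V Q : Type*} (hm hp : Q → V) (φ : Q → V)
    (hcond : ∀ e : Q, ∃ f : Q, hm f = φ e ∧ hp f = hp e ∧ φ f = hm e) :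
    (∀ x y : V, Relation.ReflTransGen (quiverStep hm hp) x y ↔
        (quiverHypergraph hm hp φ).Reach x y) ∧
      ((∀ x : V, ¬ Relation.TransGen (quiverStep hm hp) x x) ↔
        (quiverHypergraph hm hp φ).Acyclic) := by
  rw [step_eq hm hp φ hcond]
  exact ⟨fun _ _ => Iff.rfl, Iff.rfl⟩
end
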